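/- arXiv:1710.11592 — 4 statements merged into one kernel-verified Lean document; each statement's English description precedes it below -/
import Mathlib

section
/- Let v̂₀ ∈ ℝ^d be a unit vector, σ > 0, t ≥ 3, and r₁, r₂ ∈ [d] coordinate indices. Then (1/σ^d)·∫_{⟨y, v̂₀⟩ ≥ tσ} |y(r₁)·y(r₂)|·exp(−π‖y‖₂²/σ²) dy < (σ²/(16π))·exp(−t²). -/
/-!
Write `y(r) = ⟪y, e_r⟫` and split `e_r = ⟪e_r, v⟫ v + w_r` with `w_r ⟂ v`, so that
`|y(r₁) y(r₂)| ≤ 2⟪y, v⟫² + ⟪y, w_{r₁}⟫² + ⟪y, w_{r₂}⟫²`. In an orthonormal basis containing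
`v` and `w_r / ‖w_r‖` the Gaussian `exp(-π‖y‖²/σ²)` is a product of one-dimensional Gaussians,
each of total mass `σ`, so every term becomes a product of one-dimensional (truncated) moments.
On the half-line `z ≥ tσ` one has `exp(-πz²/σ²) ≤ exp(-2t²) exp(-z²/σ²)`, which makes each
term at most `σ^(d+2) exp(-2t²)`. The total `4 σ^(d+2) exp(-2t²)` is below the claimed bound
because `exp(t²) ≥ exp 9 > 64π`.
-/

open Real MeasureTheory Set Module
open scoped RealInnerProductSpace

noncomputable def gaussianRho {E : Type*} [NormedAddCommGroup E] (σ : ℝ) (y : E) : ℝ :=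
  exp (-π * ‖y‖ ^ 2 / σ ^ 2)

theorem gaussianRho_pos {E : Type*} [NormedAddCommGroup E] (σ : ℝ) (y : E) :
    0 < gaussianRho σ y :=
  exp_pos _

theorem gaussianRho_real (σ z : ℝ) : gaussianRho σ z = exp (-(π / σ ^ 2) * z ^ 2) := by
  rw [gaussianRho, norm_eq_abs, sq_abs]
  ring_nf

theorem integral_sq_mul_exp_neg_mul_sq {b : ℝ} (hb : 0 < b) :
    ∫ z : ℝ, z ^ 2 * exp (-b * z ^ 2) = √(π / b) / (2 * b) := by
  have hΓ : Gamma (3 / 2) = √π / 2 := by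
    rw [show (3 / 2 : ℝ) = 1 / 2 + 1 by norm_num, Gamma_add_one (by norm_num), Gamma_one_half_eq]
    ring
  have hhalf : ∫ z in Ioi (0 : ℝ), z ^ (2 : ℝ) * exp (-b * z ^ (2 : ℝ)) = √π / (4 * b * √b) := by
    rw [integral_rpow_mul_exp_neg_mul_rpow two_pos (by norm_num) hb,
      show (-(2 + 1) / 2 : ℝ) = -1 - 1 / 2 by norm_num, rpow_sub hb, rpow_neg_one,
      ← sqrt_eq_rpow, show ((2 : ℝ) + 1) / 2 = 3 / 2 by norm_num, hΓ]
    field_simp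
    ring
  calc ∫ z : ℝ, z ^ 2 * exp (-b * z ^ 2)
      = ∫ z : ℝ, |z| ^ (2 : ℝ) * exp (-b * |z| ^ (2 : ℝ)) := by simp [sq_abs]
    _ = √(π / b) / (2 * b) := by
      rw [integral_comp_abs (f := fun z => z ^ (2 : ℝ) * exp (-b * z ^ (2 : ℝ))), hhalf,
        sqrt_div' _ hb.le]
      field_simp
      ring

theorem integrable_sq_mul_exp_neg_mul_sq {b : ℝ} (hb : 0 < b) :
    Integrable fun z : ℝ => z ^ 2 * exp (-b * z ^ 2) := by
  simpa only [rpow_two] using integrable_rpow_mul_exp_neg_mul_sq hb (s := 2) (by norm_num)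

theorem integral_indicator_mul {X : Type*} [MeasurableSpace X] {μ : Measure X} {s : Set X}
    (hs : MeasurableSet s) (f g : X → ℝ) :
    ∫ x, s.indicator f x * g x ∂μ = ∫ x in s, f x * g x ∂μ := by
  rw [← integral_indicator hs]
  congr 1 with x
  exact (indicator_mul_left _ _ _).symm

section Line

variable {σ t : ℝ}

theorem integral_gaussianRho_real (hσ : 0 < σ) : ∫ z : ℝ, gaussianRho σ z = σ := by
  simp_rw [gaussianRho_real, integral_gaussian, div_div_cancel₀ pi_ne_zero, sqrt_sq hσ.le]

theorem integral_sq_mul_gaussianRho_real (hσ : 0 < σ) :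
    ∫ z : ℝ, z ^ 2 * gaussianRho σ z = σ ^ 3 / (2 * π) := by
  simp_rw [gaussianRho_real]
  rw [integral_sq_mul_exp_neg_mul_sq (by positivity), div_div_cancel₀ pi_ne_zero, sqrt_sq hσ.le]
  field_simp

theorem integrable_gaussianRho_real (hσ : 0 < σ) : Integrable fun z : ℝ => gaussianRho σ z := by
  simpa only [gaussianRho_real] using integrable_exp_neg_mul_sq (b := π / σ ^ 2) (by positivity)

theorem integrable_sq_mul_gaussianRho_real (hσ : 0 < σ) :
    Integrable fun z : ℝ => z ^ 2 * gaussianRho σ z := by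
  simpa only [gaussianRho_real] using
    integrable_sq_mul_exp_neg_mul_sq (b := π / σ ^ 2) (by positivity)

theorem gaussianRho_real_le {z : ℝ} (hσ : 0 < σ) (ht : 0 ≤ t) (hz : t * σ ≤ z) :
    gaussianRho σ z ≤ exp (-(2 * t ^ 2)) * exp (-(1 / σ ^ 2) * z ^ 2) := by
  have hsq : (t * σ) ^ 2 ≤ z ^ 2 := pow_le_pow_left₀ (by positivity) hz 2
  rw [gaussianRho_real, ← exp_add, exp_le_exp,
    show -(2 * t ^ 2) + -(1 / σ ^ 2) * z ^ 2 = -((2 * (t * σ) ^ 2 + z ^ 2) / σ ^ 2) by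
      field_simp; ring,
    show -(π / σ ^ 2) * z ^ 2 = -(π * z ^ 2 / σ ^ 2) by ring, neg_le_neg_iff]
  gcongr
  nlinarith [pi_gt_three, sq_nonneg z]

theorem setIntegral_Ici_mul_gaussianRho_le (hσ : 0 < σ) (ht : 0 ≤ t) {f : ℝ → ℝ}
    (hf : ∀ z, 0 ≤ f z) (hfi : Integrable fun z => f z * exp (-(1 / σ ^ 2) * z ^ 2)) :
    ∫ z in Ici (t * σ), f z * gaussianRho σ z
      ≤ exp (-(2 * t ^ 2)) * ∫ z, f z * exp (-(1 / σ ^ 2) * z ^ 2) := by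
  rw [← integral_const_mul]
  calc ∫ z in Ici (t * σ), f z * gaussianRho σ z
      ≤ ∫ z in Ici (t * σ), exp (-(2 * t ^ 2)) * (f z * exp (-(1 / σ ^ 2) * z ^ 2)) := by
        refine integral_mono_of_nonneg
          (.of_forall fun z => mul_nonneg (hf z) (exp_pos _).le) (hfi.const_mul _).integrableOn ?_
        filter_upwards [ae_restrict_mem measurableSet_Ici] with z hz
        rw [mul_left_comm]
        exact mul_le_mul_of_nonneg_left (gaussianRho_real_le hσ ht hz) (hf z)
    _ ≤ ∫ z, exp (-(2 * t ^ 2)) * (f z * exp (-(1 / σ ^ 2) * z ^ 2)) :=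
        setIntegral_le_integral (hfi.const_mul _) (.of_forall fun z => by positivity [hf z])

theorem setIntegral_Ici_gaussianRho_le (hσ : 0 < σ) (ht : 0 ≤ t) :
    ∫ z in Ici (t * σ), gaussianRho σ z ≤ 2 * σ * exp (-(2 * t ^ 2)) := by
  have h := setIntegral_Ici_mul_gaussianRho_le hσ ht (f := fun _ => 1) (fun _ => zero_le_one)
    (by simpa only [one_mul] using integrable_exp_neg_mul_sq (b := 1 / σ ^ 2) (by positivity))
  simp only [one_mul, integral_gaussian, div_div_eq_mul_div, div_one] at h
  refine h.trans ?_
  rw [mul_comm]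
  gcongr
  calc √(π * σ ^ 2) ≤ √((2 * σ) ^ 2) := by gcongr; nlinarith [pi_lt_four]
    _ = 2 * σ := sqrt_sq (by positivity)

theorem setIntegral_Ici_sq_mul_gaussianRho_le (hσ : 0 < σ) (ht : 0 ≤ t) :
    ∫ z in Ici (t * σ), z ^ 2 * gaussianRho σ z ≤ σ ^ 3 * exp (-(2 * t ^ 2)) := by
  have h := setIntegral_Ici_mul_gaussianRho_le hσ ht (f := fun z => z ^ 2) sq_nonneg
    (integrable_sq_mul_exp_neg_mul_sq (by positivity))
  rw [integral_sq_mul_exp_neg_mul_sq (by positivity), div_div_eq_mul_div, div_one,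
    sqrt_mul pi_pos.le, sqrt_sq hσ.le] at h
  refine h.trans ?_
  rw [mul_comm]
  gcongr
  have : √π ≤ 2 := by rw [sqrt_le_left zero_le_two]; linarith [pi_lt_four]
  field_simp
  nlinarith [pow_pos hσ 3]

end Line

section Euclidean

variable {E : Type*} [NormedAddCommGroup E] [InnerProductSpace ℝ E] {σ : ℝ}

theorem OrthonormalBasis.gaussianRho_eq_prod {ι : Type*} [Fintype ι]
    (b : OrthonormalBasis ι ℝ E) (y : E) : gaussianRho σ y = ∏ i, gaussianRho σ (b.repr y i) := by
  simp_rw [gaussianRho, ← exp_sum, ← b.repr.norm_map y, EuclideanSpace.norm_sq_eq,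
    Finset.mul_sum, Finset.sum_div]

theorem OrthonormalBasis.prod_mul_gaussianRho_eq {ι : Type*} [Fintype ι] [DecidableEq ι]
    (b : OrthonormalBasis ι ℝ E) (s : Finset ι) (f : ι → ℝ → ℝ) (y : E) :
    (∏ i ∈ s, f i (b.repr y i)) * gaussianRho σ y
      = ∏ i, (fun z => (if i ∈ s then f i z else 1) * gaussianRho σ z) (b.repr y i) := by
  rw [Finset.prod_mul_distrib, b.gaussianRho_eq_prod, Finset.prod_ite_mem, Finset.univ_inter]

variable [FiniteDimensional ℝ E]

theorem exists_orthonormalBasis_mem {v : E} (hv : ‖v‖ = 1) :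
    ∃ (s : Finset E) (b : OrthonormalBasis s ℝ E), v ∈ s ∧ ⇑b = Subtype.val := by
  classical
  have hon : Orthonormal ℝ (Subtype.val : ({v} : Set E) → E) := by
    rw [orthonormal_subtype_iff_ite]
    simp [hv]
  obtain ⟨s, b, hsub, hb⟩ := hon.exists_orthonormalBasis_extension
  exact ⟨s, b, hsub (by simp), hb⟩

theorem exists_orthonormalBasis_mem_pair {u v : E} (hu : ‖u‖ = 1) (hv : ‖v‖ = 1)
    (huv : ⟪u, v⟫ = 0) :
    ∃ (s : Finset E) (b : OrthonormalBasis s ℝ E), u ∈ s ∧ v ∈ s ∧ ⇑b = Subtype.val := by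
  classical
  have hne : u ≠ v := by rintro rfl; simp_all
  have hon : Orthonormal ℝ (Subtype.val : ({u, v} : Set E) → E) := by
    rw [orthonormal_subtype_iff_ite]
    simp [hu, hv, huv, real_inner_comm u v, hne, hne.symm]
  obtain ⟨s, b, hsub, hb⟩ := hon.exists_orthonormalBasis_extension
  exact ⟨s, b, hsub (by simp), hsub (by simp), hb⟩

variable [MeasurableSpace E] [BorelSpace E]

namespace OrthonormalBasis

variable {ι : Type*} [Fintype ι]

theorem integral_prod_repr (b : OrthonormalBasis ι ℝ E) (g : ι → ℝ → ℝ) :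
    ∫ y, ∏ i, g i (b.repr y i) = ∏ i, ∫ z, g i z :=
  calc ∫ y, ∏ i, g i (b.repr y i) = ∫ x : EuclideanSpace ℝ ι, ∏ i, g i (x i) :=
        b.measurePreserving_measurableEquiv.integral_comp' (fun x => ∏ i, g i (x i))
    _ = ∫ x : ι → ℝ, ∏ i, g i (x i) :=
        (EuclideanSpace.volume_preserving_symm_measurableEquiv_toLp ι).integral_comp'
          (fun x => ∏ i, g i (x i))
    _ = ∏ i, ∫ z, g i z := integral_fintype_prod_eq_prod g

theorem integrable_prod_repr (b : OrthonormalBasis ι ℝ E) {g : ι → ℝ → ℝ}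
    (hg : ∀ i, Integrable (g i)) : Integrable fun y => ∏ i, g i (b.repr y i) := by
  have h := (EuclideanSpace.volume_preserving_symm_measurableEquiv_toLp ι).integrable_comp_emb
    (MeasurableEquiv.measurableEmbedding _) |>.mpr (Integrable.fintype_prod hg)
  exact (b.measurePreserving_repr.integrable_comp_emb b.measurableEquiv.measurableEmbedding).mpr h

-- Every coordinate outside `s` contributes a factor `σ`; the power `σ ^ s.card` sits on the left
-- so that no truncated exponent `card ι - s.card` appears.
theorem integral_prod_mul_gaussianRho [DecidableEq ι] (b : OrthonormalBasis ι ℝ E) (hσ : 0 < σ)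
    (s : Finset ι) (f : ι → ℝ → ℝ) :
    σ ^ s.card * ∫ y, (∏ i ∈ s, f i (b.repr y i)) * gaussianRho σ y
      = (∏ i ∈ s, ∫ z, f i z * gaussianRho σ z) * σ ^ Fintype.card ι := by
  have hfactor : ∀ i, ∫ z, (if i ∈ s then f i z else 1) * gaussianRho σ z
      = if i ∈ s then ∫ z, f i z * gaussianRho σ z else σ := by
    intro i
    split_ifs
    · rfl
    · simpa using integral_gaussianRho_real hσ
  rw [integral_congr_ae (.of_forall (b.prod_mul_gaussianRho_eq s f)),
    b.integral_prod_repr fun i z => (if i ∈ s then f i z else 1) * gaussianRho σ z]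
  simp only [hfactor]
  rw [Finset.prod_ite, Finset.prod_const, ← Finset.card_add_card_compl s, pow_add]
  simp only [Finset.filter_mem_eq_inter, Finset.univ_inter, Finset.filter_not,
    ← Finset.compl_eq_univ_sdiff]
  ring

theorem integrable_prod_mul_gaussianRho [DecidableEq ι] (b : OrthonormalBasis ι ℝ E)
    (hσ : 0 < σ) (s : Finset ι) {f : ι → ℝ → ℝ}
    (hf : ∀ i ∈ s, Integrable fun z => f i z * gaussianRho σ z) :
    Integrable fun y => (∏ i ∈ s, f i (b.repr y i)) * gaussianRho σ y := by
  refine (integrable_congr (.of_forall (b.prod_mul_gaussianRho_eq s f))).mpr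
    (b.integrable_prod_repr (g := fun i z => (if i ∈ s then f i z else 1) * gaussianRho σ z)
      fun i => ?_)
  split_ifs with hi
  · exact hf i hi
  · simpa using integrable_gaussianRho_real hσ

end OrthonormalBasis

theorem integral_comp_inner_mul_gaussianRho {v : E} (hv : ‖v‖ = 1) (hσ : 0 < σ) (f : ℝ → ℝ) :
    σ * ∫ y, f ⟪y, v⟫ * gaussianRho σ y
      = (∫ z, f z * gaussianRho σ z) * σ ^ finrank ℝ E := by
  classical
  obtain ⟨s, b, hvs, hb⟩ := exists_orthonormalBasis_mem hv
  have h := b.integral_prod_mul_gaussianRho hσ {⟨v, hvs⟩} fun _ => f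
  rw [← finrank_eq_card_basis b.toBasis] at h
  simpa [b.repr_apply_apply, hb, real_inner_comm] using h

theorem integrable_comp_inner_mul_gaussianRho {v : E} (hv : ‖v‖ = 1) (hσ : 0 < σ) {f : ℝ → ℝ}
    (hf : Integrable fun z => f z * gaussianRho σ z) :
    Integrable fun y => f ⟪y, v⟫ * gaussianRho σ y := by
  classical
  obtain ⟨s, b, hvs, hb⟩ := exists_orthonormalBasis_mem hv
  have h := b.integrable_prod_mul_gaussianRho hσ {⟨v, hvs⟩} (f := fun _ => f) (by simpa using hf)
  simpa [b.repr_apply_apply, hb, real_inner_comm] using h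

theorem integral_comp_inner_mul_comp_inner_mul_gaussianRho {u v : E} (hu : ‖u‖ = 1)
    (hv : ‖v‖ = 1) (huv : ⟪u, v⟫ = 0) (hσ : 0 < σ) (f g : ℝ → ℝ) :
    σ ^ 2 * ∫ y, f ⟪y, u⟫ * g ⟪y, v⟫ * gaussianRho σ y
      = (∫ z, f z * gaussianRho σ z) * (∫ z, g z * gaussianRho σ z) * σ ^ finrank ℝ E := by
  classical
  obtain ⟨s, b, hus, hvs, hb⟩ := exists_orthonormalBasis_mem_pair hu hv huv
  have hne : (⟨u, hus⟩ : s) ≠ ⟨v, hvs⟩ := by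
    rintro ⟨⟩
    simp_all
  have h := b.integral_prod_mul_gaussianRho hσ {⟨u, hus⟩, ⟨v, hvs⟩}
    fun i => if i = ⟨u, hus⟩ then f else g
  rw [← finrank_eq_card_basis b.toBasis] at h
  simpa [Finset.prod_pair hne, Finset.card_pair hne, b.repr_apply_apply, hb, real_inner_comm,
    hne.symm] using h

theorem integrable_inner_sq_mul_gaussianRho (a : E) (hσ : 0 < σ) :
    Integrable fun y => ⟪y, a⟫ ^ 2 * gaussianRho σ y := by
  rcases eq_or_ne a 0 with rfl | ha
  · simp
  have h := integrable_comp_inner_mul_gaussianRho (norm_smul_inv_norm (𝕜 := ℝ) ha) hσ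
    (f := fun z => ‖a‖ ^ 2 * z ^ 2)
    (by simpa only [mul_assoc] using (integrable_sq_mul_gaussianRho_real hσ).const_mul _)
  refine h.congr (.of_forall fun y => ?_)
  simp only [real_inner_smul_right, RCLike.ofReal_real_eq_id, id_eq]
  field_simp

section HalfSpace

variable {v : E} {t : ℝ}

theorem setIntegral_inner_sq_mul_gaussianRho_le (hv : ‖v‖ = 1) (hσ : 0 < σ) (ht : 0 ≤ t) :
    ∫ y in {y : E | t * σ ≤ ⟪y, v⟫}, ⟪y, v⟫ ^ 2 * gaussianRho σ y
      ≤ σ ^ (finrank ℝ E + 2) * exp (-(2 * t ^ 2)) := by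
  have hind : ∀ y, {y : E | t * σ ≤ ⟪y, v⟫}.indicator (fun y => ⟪y, v⟫ ^ 2 * gaussianRho σ y) y
      = (Ici (t * σ)).indicator (fun z => z ^ 2) ⟪y, v⟫ * gaussianRho σ y := by
    intro y
    by_cases hy : t * σ ≤ ⟪y, v⟫ <;> simp [hy]
  have h := integral_comp_inner_mul_gaussianRho hv hσ ((Ici (t * σ)).indicator fun z => z ^ 2)
  rw [integral_indicator_mul measurableSet_Ici] at h
  rw [← integral_indicator (measurableSet_le measurable_const (by fun_prop)),
    integral_congr_ae (.of_forall hind)]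
  refine le_of_mul_le_mul_left ?_ hσ
  calc σ * ∫ y, (Ici (t * σ)).indicator (fun z => z ^ 2) ⟪y, v⟫ * gaussianRho σ y
      ≤ σ ^ 3 * exp (-(2 * t ^ 2)) * σ ^ finrank ℝ E := by
        rw [h]
        gcongr
        exact setIntegral_Ici_sq_mul_gaussianRho_le hσ ht
    _ = σ * (σ ^ (finrank ℝ E + 2) * exp (-(2 * t ^ 2))) := by ring

theorem setIntegral_inner_sq_mul_gaussianRho_le_of_inner_eq_zero {w : E} (hv : ‖v‖ = 1)
    (hwv : ⟪w, v⟫ = 0) (hσ : 0 < σ) (ht : 0 ≤ t) :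
    ∫ y in {y : E | t * σ ≤ ⟪y, v⟫}, ⟪y, w⟫ ^ 2 * gaussianRho σ y
      ≤ ‖w‖ ^ 2 * (σ ^ (finrank ℝ E + 2) * exp (-(2 * t ^ 2))) := by
  rcases eq_or_ne w 0 with rfl | hw
  · simp
  set u : E := (‖w‖⁻¹ : ℝ) • w
  have hu : ‖u‖ = 1 := norm_smul_inv_norm (𝕜 := ℝ) hw
  have huv : ⟪u, v⟫ = 0 := by rw [real_inner_smul_left, hwv, mul_zero]
  have hind : ∀ y, {y : E | t * σ ≤ ⟪y, v⟫}.indicator (fun y => ⟪y, w⟫ ^ 2 * gaussianRho σ y) y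
      = ‖w‖ ^ 2 * (⟪y, u⟫ ^ 2 * (Ici (t * σ)).indicator 1 ⟪y, v⟫ * gaussianRho σ y) := by
    intro y
    by_cases hy : t * σ ≤ ⟪y, v⟫
    · simp [hy, u, real_inner_smul_right]
      field_simp
    · simp [hy]
  have h := integral_comp_inner_mul_comp_inner_mul_gaussianRho hu hv huv hσ
    (fun z => z ^ 2) ((Ici (t * σ)).indicator 1)
  rw [integral_sq_mul_gaussianRho_real hσ, integral_indicator_mul measurableSet_Ici] at h
  simp only [Pi.one_apply, one_mul] at h
  rw [← integral_indicator (measurableSet_le measurable_const (by fun_prop)),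
    integral_congr_ae (.of_forall hind), integral_const_mul]
  refine le_of_mul_le_mul_left ?_ (pow_pos hσ 2)
  calc σ ^ 2 * (‖w‖ ^ 2
        * ∫ y, ⟪y, u⟫ ^ 2 * (Ici (t * σ)).indicator 1 ⟪y, v⟫ * gaussianRho σ y)
      ≤ ‖w‖ ^ 2 * (σ ^ 3 / (2 * π) * (2 * σ * exp (-(2 * t ^ 2))) * σ ^ finrank ℝ E) := by
        rw [mul_left_comm, h]
        gcongr
        exact setIntegral_Ici_gaussianRho_le hσ ht
    _ = σ ^ 2 * (‖w‖ ^ 2 * (σ ^ (finrank ℝ E + 2) * exp (-(2 * t ^ 2)))) / π := by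
        field_simp
        ring
    _ ≤ σ ^ 2 * (‖w‖ ^ 2 * (σ ^ (finrank ℝ E + 2) * exp (-(2 * t ^ 2)))) :=
        div_le_self (by positivity) (by linarith [pi_gt_three])

theorem setIntegral_inner_sq_mul_gaussianRho_le_of_norm_le_one {a : E} (hv : ‖v‖ = 1)
    (ha : ‖a‖ ≤ 1) (hσ : 0 < σ) (ht : 0 ≤ t) :
    ∫ y in {y : E | t * σ ≤ ⟪y, v⟫}, ⟪y, a⟫ ^ 2 * gaussianRho σ y
      ≤ 4 * (σ ^ (finrank ℝ E + 2) * exp (-(2 * t ^ 2))) := by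
  set w := a - ⟪a, v⟫ • v
  have hvv : ⟪v, v⟫ = 1 := by rw [real_inner_self_eq_norm_sq, hv, one_pow]
  have hwv : ⟪w, v⟫ = 0 := by simp [w, inner_sub_left, real_inner_smul_left, hv]
  have hav : ⟪a, v⟫ ^ 2 ≤ 1 := by
    have := abs_real_inner_le_norm a v
    rw [hv, mul_one] at this
    nlinarith [abs_nonneg ⟪a, v⟫, sq_abs ⟪a, v⟫]
  have hw : ‖w‖ ^ 2 ≤ 1 := by
    have : ‖w‖ ^ 2 = ‖a‖ ^ 2 - ⟪a, v⟫ ^ 2 := by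
      rw [← real_inner_self_eq_norm_sq, ← real_inner_self_eq_norm_sq]
      simp only [w, inner_sub_left, inner_sub_right, real_inner_smul_left, real_inner_smul_right,
        hvv, real_inner_comm a v]
      ring
    nlinarith [norm_nonneg a]
  have hpt : ∀ y, ⟪y, a⟫ ^ 2 * gaussianRho σ y
      ≤ 2 * (⟪y, v⟫ ^ 2 * gaussianRho σ y) + 2 * (⟪y, w⟫ ^ 2 * gaussianRho σ y) := by
    intro y
    have hdecomp : ⟪y, a⟫ = ⟪a, v⟫ * ⟪y, v⟫ + ⟪y, w⟫ := by
      simp [w, inner_sub_right, real_inner_smul_right]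
    have hsq : ⟪y, a⟫ ^ 2 ≤ 2 * ⟪y, v⟫ ^ 2 + 2 * ⟪y, w⟫ ^ 2 := by
      rw [hdecomp]
      nlinarith [sq_nonneg (⟪a, v⟫ * ⟪y, v⟫ - ⟪y, w⟫),
        mul_le_mul_of_nonneg_right hav (sq_nonneg ⟪y, v⟫)]
    nlinarith [mul_le_mul_of_nonneg_right hsq (gaussianRho_pos σ y).le]
  have hint := fun b : E => (integrable_inner_sq_mul_gaussianRho b hσ).integrableOn
    (s := {y : E | t * σ ≤ ⟪y, v⟫})
  calc ∫ y in {y : E | t * σ ≤ ⟪y, v⟫}, ⟪y, a⟫ ^ 2 * gaussianRho σ y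
      ≤ ∫ y in {y : E | t * σ ≤ ⟪y, v⟫},
          (2 * (⟪y, v⟫ ^ 2 * gaussianRho σ y) + 2 * (⟪y, w⟫ ^ 2 * gaussianRho σ y)) :=
        setIntegral_mono (hint a) (.add ((hint v).const_mul 2) ((hint w).const_mul 2)) hpt
    _ = 2 * (∫ y in {y : E | t * σ ≤ ⟪y, v⟫}, ⟪y, v⟫ ^ 2 * gaussianRho σ y)
        + 2 * ∫ y in {y : E | t * σ ≤ ⟪y, v⟫}, ⟪y, w⟫ ^ 2 * gaussianRho σ y := by
        rw [integral_add ((hint v).const_mul 2) ((hint w).const_mul 2), integral_const_mul,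
          integral_const_mul]
    _ ≤ 2 * (σ ^ (finrank ℝ E + 2) * exp (-(2 * t ^ 2)))
        + 2 * (‖w‖ ^ 2 * (σ ^ (finrank ℝ E + 2) * exp (-(2 * t ^ 2)))) := by
        gcongr
        · exact setIntegral_inner_sq_mul_gaussianRho_le hv hσ ht
        · exact setIntegral_inner_sq_mul_gaussianRho_le_of_inner_eq_zero hv hwv hσ ht
    _ ≤ 4 * (σ ^ (finrank ℝ E + 2) * exp (-(2 * t ^ 2))) := by
        nlinarith [mul_le_mul_of_nonneg_right hw
          (by positivity : 0 ≤ σ ^ (finrank ℝ E + 2) * exp (-(2 * t ^ 2)))]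

theorem setIntegral_abs_inner_mul_inner_mul_gaussianRho_le {a b : E} (hv : ‖v‖ = 1)
    (ha : ‖a‖ ≤ 1) (hb : ‖b‖ ≤ 1) (hσ : 0 < σ) (ht : 0 ≤ t) :
    ∫ y in {y : E | t * σ ≤ ⟪y, v⟫}, |⟪y, a⟫ * ⟪y, b⟫| * gaussianRho σ y
      ≤ 4 * (σ ^ (finrank ℝ E + 2) * exp (-(2 * t ^ 2))) := by
  have hint := fun c : E => (integrable_inner_sq_mul_gaussianRho c hσ).integrableOn
    (s := {y : E | t * σ ≤ ⟪y, v⟫})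
  have hpt : ∀ y, |⟪y, a⟫ * ⟪y, b⟫| * gaussianRho σ y
      ≤ (⟪y, a⟫ ^ 2 * gaussianRho σ y + ⟪y, b⟫ ^ 2 * gaussianRho σ y) / 2 := by
    intro y
    have h : |⟪y, a⟫ * ⟪y, b⟫| ≤ (⟪y, a⟫ ^ 2 + ⟪y, b⟫ ^ 2) / 2 := by
      rw [abs_mul, ← sq_abs ⟪y, a⟫, ← sq_abs ⟪y, b⟫]
      nlinarith [sq_nonneg (|⟪y, a⟫| - |⟪y, b⟫|)]
    nlinarith [mul_le_mul_of_nonneg_right h (gaussianRho_pos σ y).le]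
  calc ∫ y in {y : E | t * σ ≤ ⟪y, v⟫}, |⟪y, a⟫ * ⟪y, b⟫| * gaussianRho σ y
      ≤ ∫ y in {y : E | t * σ ≤ ⟪y, v⟫},
          (⟪y, a⟫ ^ 2 * gaussianRho σ y + ⟪y, b⟫ ^ 2 * gaussianRho σ y) / 2 :=
        integral_mono_of_nonneg
          (.of_forall fun y => mul_nonneg (abs_nonneg _) (gaussianRho_pos σ y).le)
          (((hint a).add (hint b)).div_const 2) (.of_forall hpt)
    _ = ((∫ y in {y : E | t * σ ≤ ⟪y, v⟫}, ⟪y, a⟫ ^ 2 * gaussianRho σ y)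
        + ∫ y in {y : E | t * σ ≤ ⟪y, v⟫}, ⟪y, b⟫ ^ 2 * gaussianRho σ y) / 2 := by
        rw [integral_div, integral_add (hint a) (hint b)]
    _ ≤ (4 * (σ ^ (finrank ℝ E + 2) * exp (-(2 * t ^ 2)))
        + 4 * (σ ^ (finrank ℝ E + 2) * exp (-(2 * t ^ 2)))) / 2 := by
        gcongr
        · exact setIntegral_inner_sq_mul_gaussianRho_le_of_norm_le_one hv ha hσ ht
        · exact setIntegral_inner_sq_mul_gaussianRho_le_of_norm_le_one hv hb hσ ht
    _ = 4 * (σ ^ (finrank ℝ E + 2) * exp (-(2 * t ^ 2))) := by ring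

end HalfSpace

end Euclidean

theorem sixty_four_mul_pi_lt_exp_sq {t : ℝ} (ht : 3 ≤ t) : 64 * π < exp (t ^ 2) :=
  calc 64 * π < 8.5 ^ 3 := by nlinarith [pi_lt_four]
    _ ≤ exp 3 ^ 3 := by
        gcongr
        linarith [quadratic_le_exp_of_nonneg (x := 3) (by norm_num)]
    _ = exp 9 := by rw [← exp_nat_mul]; norm_num
    _ ≤ exp (t ^ 2) := by gcongr; nlinarith

/-- Truncated second-moment bound over a Gaussian half-space: for a unit vector `v̂₀`,
coordinates `r₁ r₂` and `t ≥ 3`,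
`σ^{-d} ∫_{⟨y,v̂₀⟩ ≥ tσ} |y(r₁)y(r₂)| e^{-π‖y‖²/σ²} dy < (σ²/16π) e^{-t²}`. -/
theorem stmt_8 (d : ℕ) (v : EuclideanSpace ℝ (Fin d)) (hv : ‖v‖ = 1) (σ t : ℝ)
    (hσ : 0 < σ) (ht : 3 ≤ t) (r₁ r₂ : Fin d) :
    (1 / σ ^ d) * ∫ y in {y : EuclideanSpace ℝ (Fin d) | t * σ ≤ ⟪y, v⟫},
        |y r₁ * y r₂| * Real.exp (-π * ‖y‖ ^ 2 / σ ^ 2) <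
      (σ ^ 2 / (16 * π)) * Real.exp (-t ^ 2) := by
  have hcoord : ∀ (y : EuclideanSpace ℝ (Fin d)) r, y r = ⟪y, EuclideanSpace.single r 1⟫ := by
    simp [EuclideanSpace.inner_single_right]
  have hI := setIntegral_abs_inner_mul_inner_mul_gaussianRho_le hv
    (a := EuclideanSpace.single r₁ 1) (b := EuclideanSpace.single r₂ 1) (by simp) (by simp) hσ
    (by linarith : (0 : ℝ) ≤ t)
  simp only [← hcoord, finrank_euclideanSpace_fin, gaussianRho] at hI
  have hexp : exp (-(2 * t ^ 2)) = exp (-t ^ 2) * exp (-t ^ 2) := by rw [← exp_add]; ring_nf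
  have hsmall : 64 * π * exp (-t ^ 2) < 1 := by
    rw [exp_neg, ← div_eq_mul_inv, div_lt_one (exp_pos _)]
    exact sixty_four_mul_pi_lt_exp_sq ht
  calc (1 / σ ^ d) * ∫ y in {y : EuclideanSpace ℝ (Fin d) | t * σ ≤ ⟪y, v⟫},
        |y r₁ * y r₂| * exp (-π * ‖y‖ ^ 2 / σ ^ 2)
      ≤ (1 / σ ^ d) * (4 * (σ ^ (d + 2) * exp (-(2 * t ^ 2)))) := by gcongr
    _ = σ ^ 2 / (16 * π) * exp (-t ^ 2) * (64 * π * exp (-t ^ 2)) := by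
        rw [hexp]; field_simp; ring
    _ < σ ^ 2 / (16 * π) * exp (-t ^ 2) := mul_lt_of_lt_one_right (by positivity) hsmall
end

section
/- Let f, f̃ be the p.d.f.s of two uniform (standard) mixtures of k spherical Gaussians in ℝ^d with means {μ_j} and {μ̃_j}, all of norm at most √d. Suppose ‖f − f̃‖₂ ≤ ε for some ε ≤ exp(−6d). Then ‖f − f̃‖₁ ≤ 2√ε. -/
open Real MeasureTheory

namespace Stmt9Aux

lemma gauss_integrable (d : ℕ) (b : ℝ) (hb : 0 < b) (m : EuclideanSpace ℝ (Fin d)) :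
    Integrable (fun x : EuclideanSpace ℝ (Fin d) => Real.exp (-b * ‖x - m‖ ^ 2)) := by
  have h := GaussianFourier.integrable_cexp_neg_mul_sq_norm_add
    (V := EuclideanSpace ℝ (Fin d)) (b := (b : ℂ)) (by simpa using hb) 0 0
  have h2 := h.re
  have h3 : Integrable (fun x : EuclideanSpace ℝ (Fin d) => Real.exp (-b * ‖x‖ ^ 2)) := by
    refine h2.congr (Filter.Eventually.of_forall fun x => ?_)
    simp [← Complex.ofReal_pow, ← Complex.ofReal_neg, ← Complex.ofReal_mul, Complex.exp_ofReal_re]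
  exact h3.comp_sub_right m

lemma gauss_integral (d : ℕ) (b : ℝ) (hb : 0 < b) (m : EuclideanSpace ℝ (Fin d)) :
    ∫ x : EuclideanSpace ℝ (Fin d), Real.exp (-b * ‖x - m‖ ^ 2) = (π / b) ^ ((d : ℝ) / 2) := by
  rw [integral_sub_right_eq_self (fun x : EuclideanSpace ℝ (Fin d) => Real.exp (-b * ‖x‖ ^ 2)) m,
    GaussianFourier.integral_rexp_neg_mul_sq_norm hb, finrank_euclideanSpace_fin]

end Stmt9Aux

set_option maxHeartbeats 3000000 in
/-- From `L²` to `L¹` distance for standard mixtures of spherical Gaussians with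
means bounded by `√d`: if `‖f - f̃‖₂ ≤ ε ≤ exp(-6d)` then `‖f - f̃‖₁ ≤ 2√ε`. -/
theorem stmt_9 (d k : ℕ) (hk : 0 < k)
    (μ μt : Fin k → EuclideanSpace ℝ (Fin d))
    (hμ : ∀ j, ‖μ j‖ ≤ Real.sqrt d) (hμt : ∀ j, ‖μt j‖ ≤ Real.sqrt d)
    (ε : ℝ) (hε₀ : 0 < ε) (hε : ε ≤ Real.exp (-6 * d))
    (f ft : EuclideanSpace ℝ (Fin d) → ℝ)
    (hf : ∀ x, f x = (1 / k) * ∑ j, Real.exp (-π * ‖x - μ j‖ ^ 2))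
    (hft : ∀ x, ft x = (1 / k) * ∑ j, Real.exp (-π * ‖x - μt j‖ ^ 2))
    (hL2 : Real.sqrt (∫ x, (f x - ft x) ^ 2) ≤ ε) :
    ∫ x, |f x - ft x| ≤ 2 * Real.sqrt ε := by
  rcases Nat.eq_zero_or_pos d with hd0 | hdpos
  · -- dimension 0 : f = ft = 1 everywhere
    subst hd0
    have hzero : ∀ x : EuclideanSpace ℝ (Fin 0), |f x - ft x| = 0 := by
      intro x
      have h1 : ∀ m : EuclideanSpace ℝ (Fin 0), x - m = 0 := fun m => Subsingleton.elim _ _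
      rw [hf, hft]
      simp [h1]
    simp only [hzero, integral_zero]
    positivity
  -- main case d ≥ 1
  set L : ℝ := -Real.log ε with hLdef
  have hεL : ε = Real.exp (-L) := by rw [hLdef, neg_neg, Real.exp_log hε₀]
  have hL6 : 6 * (d : ℝ) ≤ L := by
    have h1 : Real.log ε ≤ -6 * d := by
      calc Real.log ε ≤ Real.log (Real.exp (-6 * d)) := Real.log_le_log hε₀ hε
        _ = -6 * d := Real.log_exp _
    simp only [hLdef]; linarith
  have hd1 : (1 : ℝ) ≤ (d : ℝ) := by exact_mod_cast hdpos
  have hL6' : (6 : ℝ) ≤ L := by linarith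
  have hLpos : 0 < L := by linarith
  have hsqε : Real.sqrt ε = Real.exp (-L / 2) := by
    have h1 : Real.exp (-L / 2) * Real.exp (-L / 2) = ε := by
      rw [← Real.exp_add, hεL]; norm_num
    rw [← h1, Real.sqrt_mul_self (Real.exp_pos _).le]
  set r : ℝ := Real.sqrt L with hrdef
  set R : ℝ := Real.sqrt d + r with hRdef
  have hr0 : 0 < r := Real.sqrt_pos.mpr hLpos
  have hsd : (0:ℝ) < Real.sqrt d := Real.sqrt_pos.mpr (by linarith)
  have hR0 : 0 < R := by positivity
  have hdL : Real.sqrt d ≤ Real.sqrt L := Real.sqrt_le_sqrt (by linarith)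
  have hR2L : R ^ 2 ≤ 4 * L := by
    have h1 : R ≤ 2 * Real.sqrt L := by
      rw [hRdef]; linarith [hdL]
    have h2 : R ^ 2 ≤ (2 * Real.sqrt L) ^ 2 := by nlinarith
    have h3 : Real.sqrt L ^ 2 = L := Real.sq_sqrt hLpos.le
    nlinarith
  set B := Metric.ball (0 : EuclideanSpace ℝ (Fin d)) R with hBdef
  have hB : MeasurableSet B := measurableSet_ball
  have hBlt : volume B < ⊤ := by rw [hBdef]; exact measure_ball_lt_top
  clear_value L r R B
  -- basic properties of f, ft
  have hfnn : ∀ x, 0 ≤ f x := by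
    intro x; rw [hf]
    exact mul_nonneg (by positivity) (Finset.sum_nonneg fun j _ => (Real.exp_pos _).le)
  have hftnn : ∀ x, 0 ≤ ft x := by
    intro x; rw [hft]
    exact mul_nonneg (by positivity) (Finset.sum_nonneg fun j _ => (Real.exp_pos _).le)
  have hfle : ∀ x, f x ≤ 1 := by
    intro x; rw [hf]
    have h1 : ∑ j, Real.exp (-π * ‖x - μ j‖ ^ 2) ≤ (k : ℝ) := by
      calc ∑ j, Real.exp (-π * ‖x - μ j‖ ^ 2) ≤ ∑ _j : Fin k, (1:ℝ) := by
            refine Finset.sum_le_sum fun j _ => ?_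
            rw [Real.exp_le_one_iff]
            have : (0:ℝ) ≤ π * ‖x - μ j‖ ^ 2 := by positivity
            linarith
        _ = (k : ℝ) := by simp
    have hk' : (0:ℝ) < k := by exact_mod_cast hk
    rw [div_mul_eq_mul_div, one_mul, div_le_one hk']
    exact h1
  have hftle : ∀ x, ft x ≤ 1 := by
    intro x; rw [hft]
    have h1 : ∑ j, Real.exp (-π * ‖x - μt j‖ ^ 2) ≤ (k : ℝ) := by
      calc ∑ j, Real.exp (-π * ‖x - μt j‖ ^ 2) ≤ ∑ _j : Fin k, (1:ℝ) := by
            refine Finset.sum_le_sum fun j _ => ?_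
            rw [Real.exp_le_one_iff]
            have : (0:ℝ) ≤ π * ‖x - μt j‖ ^ 2 := by positivity
            linarith
        _ = (k : ℝ) := by simp
    have hk' : (0:ℝ) < k := by exact_mod_cast hk
    rw [div_mul_eq_mul_div, one_mul, div_le_one hk']
    exact h1
  -- integrability
  have hfi : Integrable f := by
    have h1 : Integrable (fun x : EuclideanSpace ℝ (Fin d) =>
        (1 / (k:ℝ)) * ∑ j, Real.exp (-π * ‖x - μ j‖ ^ 2)) := by
      refine Integrable.const_mul ?_ _
      exact integrable_finset_sum _ fun j _ => Stmt9Aux.gauss_integrable d π Real.pi_pos (μ j)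
    exact h1.congr (Filter.Eventually.of_forall fun x => (hf x).symm)
  have hfti : Integrable ft := by
    have h1 : Integrable (fun x : EuclideanSpace ℝ (Fin d) =>
        (1 / (k:ℝ)) * ∑ j, Real.exp (-π * ‖x - μt j‖ ^ 2)) := by
      refine Integrable.const_mul ?_ _
      exact integrable_finset_sum _ fun j _ => Stmt9Aux.gauss_integrable d π Real.pi_pos (μt j)
    exact h1.congr (Filter.Eventually.of_forall fun x => (hft x).symm)
  have hgi : Integrable (fun x : EuclideanSpace ℝ (Fin d) => f x - ft x) := hfi.sub hfti
  have hgabs : Integrable (fun x : EuclideanSpace ℝ (Fin d) => |f x - ft x|) := hgi.abs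
  have hg2i : Integrable (fun x : EuclideanSpace ℝ (Fin d) => (f x - ft x) ^ 2) := by
    refine Integrable.mono' ((hfi.add hfti).const_mul 2) ?_ ?_
    · exact (hgi.aestronglyMeasurable.mul hgi.aestronglyMeasurable).congr
        (Filter.Eventually.of_forall fun x => by simp only [Pi.mul_apply]; ring)
    · refine Filter.Eventually.of_forall fun x => ?_
      have h1 : |f x - ft x| ≤ f x + ft x := by
        rw [abs_sub_le_iff]
        constructor <;> nlinarith [hfnn x, hftnn x]
      have h2 : (f x - ft x) ^ 2 ≤ 2 * (f x + ft x) := by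
        nlinarith [hfle x, hftle x, hfnn x, hftnn x, sq_abs (f x - ft x)]
      rw [Real.norm_eq_abs, abs_of_nonneg (sq_nonneg _)]
      exact h2
  have hg2 : ∫ x, (f x - ft x) ^ 2 ≤ ε ^ 2 := by
    have h0 : 0 ≤ ∫ x, (f x - ft x) ^ 2 := integral_nonneg fun x => sq_nonneg _
    nlinarith [Real.sq_sqrt h0, Real.sqrt_nonneg (∫ x, (f x - ft x) ^ 2)]
  -- split the integral
  have hsplit : ∫ x, |f x - ft x| =
      (∫ x in B, |f x - ft x|) + ∫ x in Bᶜ, |f x - ft x| :=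
    (integral_add_compl hB hgabs).symm
  -- volume of the ball is at most exp L
  have hexpL : Real.exp L = ε⁻¹ := by
    rw [hεL, ← Real.exp_neg, neg_neg]
  have hvol : (volume B).toReal ≤ Real.exp L := by
    set β : ℝ := d / (2 * R ^ 2) with hβdef
    have hβ : 0 < β := by positivity
    have hint : Integrable (fun x : EuclideanSpace ℝ (Fin d) =>
        Real.exp (β * (R ^ 2 - ‖x‖ ^ 2))) := by
      have h1 := (Stmt9Aux.gauss_integrable d β hβ 0).const_mul (Real.exp (β * R ^ 2))
      refine h1.congr (Filter.Eventually.of_forall fun x => ?_)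
      simp only [sub_zero, ← Real.exp_add]
      congr 1
      ring
    have h1 : (volume B).toReal = ∫ x in B, (1 : ℝ) := by
      rw [setIntegral_const, smul_eq_mul, mul_one, Measure.real]
    have h2 : ∫ x in B, (1 : ℝ) ≤ ∫ x in B, Real.exp (β * (R ^ 2 - ‖x‖ ^ 2)) := by
      refine setIntegral_mono_on (integrableOn_const hBlt.ne)
        hint.integrableOn hB fun x hx => ?_
      have hxR : ‖x‖ < R := by
        simpa [hBdef, Metric.mem_ball, dist_zero_right] using hx
      have hx2 : ‖x‖ ^ 2 ≤ R ^ 2 := by nlinarith [norm_nonneg x]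
      have hexp : 0 ≤ β * (R ^ 2 - ‖x‖ ^ 2) := mul_nonneg hβ.le (by linarith)
      linarith [Real.add_one_le_exp (β * (R ^ 2 - ‖x‖ ^ 2))]
    have h3 : ∫ x in B, Real.exp (β * (R ^ 2 - ‖x‖ ^ 2)) ≤
        ∫ x : EuclideanSpace ℝ (Fin d), Real.exp (β * (R ^ 2 - ‖x‖ ^ 2)) :=
      setIntegral_le_integral hint (Filter.Eventually.of_forall fun x => (Real.exp_pos _).le)
    have h4 : ∫ x : EuclideanSpace ℝ (Fin d), Real.exp (β * (R ^ 2 - ‖x‖ ^ 2)) =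
        Real.exp (β * R ^ 2) * (π / β) ^ ((d : ℝ) / 2) := by
      have h4a : ∀ x : EuclideanSpace ℝ (Fin d), Real.exp (β * (R ^ 2 - ‖x‖ ^ 2)) =
          Real.exp (β * R ^ 2) * Real.exp (-β * ‖x - 0‖ ^ 2) := fun x => by
        simp only [sub_zero, ← Real.exp_add]; congr 1; ring
      simp_rw [h4a]
      rw [integral_const_mul, Stmt9Aux.gauss_integral d β hβ 0]
    have hβR : β * R ^ 2 = (d : ℝ) / 2 := by
      rw [hβdef]; field_simp
    set q : ℝ := π / β with hqdef
    have hqpos : 0 < q := by positivity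
    have hq : q = 2 * π * R ^ 2 / d := by
      rw [hqdef, hβdef]; field_simp
    have h48 : Real.log (48 * π) ≤ 6 := by
      rw [Real.log_le_iff_le_exp (by positivity)]
      have he : (2.7182818283 : ℝ) < Real.exp 1 := Real.exp_one_gt_d9
      have h6 : Real.exp 6 = Real.exp 1 ^ (6 : ℕ) := by
        rw [← Real.exp_nat_mul]; norm_num
      have hpi : π < 3.15 := Real.pi_lt_d2
      have hep : (2.7182818283 : ℝ) ^ (6 : ℕ) ≤ Real.exp 1 ^ (6 : ℕ) :=
        pow_le_pow_left₀ (by norm_num) he.le 6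
      have hval : (151.2 : ℝ) ≤ (2.7182818283 : ℝ) ^ (6 : ℕ) := by norm_num
      rw [h6]
      nlinarith
    have hqsplit : Real.log q = Real.log (q / (48 * π)) + Real.log (48 * π) := by
      rw [← Real.log_mul (by positivity) (by positivity)]
      congr 1
      field_simp
    have hle1 : Real.log (q / (48 * π)) ≤ q / (48 * π) - 1 :=
      Real.log_le_sub_one_of_pos (by positivity)
    have hqle : q / (48 * π) ≤ L / (6 * d) := by
      have hd0 : (0:ℝ) < d := by linarith
      have hqq : q / (48 * π) = R ^ 2 / (24 * d) := by
        rw [hq]; field_simp; ring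
      rw [hqq]
      rw [div_le_div_iff₀ (by positivity) (by positivity)]
      nlinarith [hR2L]
    have hlogq : Real.log q ≤ L / (6 * d) + 5 := by linarith
    have hnum : Real.exp (β * R ^ 2) * q ^ ((d : ℝ) / 2) ≤ Real.exp L := by
      rw [Real.rpow_def_of_pos hqpos, ← Real.exp_add, hβR, Real.exp_le_exp]
      have hmul := mul_le_mul_of_nonneg_left hlogq (by positivity : (0:ℝ) ≤ (d : ℝ) / 2)
      have heq : (d : ℝ) / 2 * (L / (6 * d) + 5) = L / 12 + 5 * d / 2 := by
        have hd0 : (d:ℝ) ≠ 0 := by positivity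
        field_simp
        ring
      rw [heq] at hmul
      have : Real.log q * ((d:ℝ)/2) = (d:ℝ)/2 * Real.log q := by ring
      nlinarith
    calc (volume B).toReal = ∫ x in B, (1 : ℝ) := h1
      _ ≤ ∫ x in B, Real.exp (β * (R ^ 2 - ‖x‖ ^ 2)) := h2
      _ ≤ ∫ x, Real.exp (β * (R ^ 2 - ‖x‖ ^ 2)) := h3
      _ = Real.exp (β * R ^ 2) * q ^ ((d : ℝ) / 2) := h4
      _ ≤ Real.exp L := hnum
  -- part 1 : the ball
  obtain ⟨θ, hθdef⟩ : ∃ θ : ℝ, θ = ε * Real.sqrt ε := ⟨_, rfl⟩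
  have hθ : 0 < θ := by rw [hθdef]; positivity
  have hball : ∫ x in B, |f x - ft x| ≤ Real.sqrt ε := by
    have hrhs : IntegrableOn (fun x : EuclideanSpace ℝ (Fin d) =>
        (f x - ft x) ^ 2 / (2 * θ) + θ / 2) B := by
      exact ((hg2i.div_const (2 * θ)).integrableOn).add
        (integrableOn_const hBlt.ne)
    have hstep1 : ∫ x in B, |f x - ft x| ≤
        ∫ x in B, ((f x - ft x) ^ 2 / (2 * θ) + θ / 2) := by
      refine setIntegral_mono_on hgabs.integrableOn hrhs hB fun x _ => ?_
      have h2' : 2 * θ * |f x - ft x| ≤ (f x - ft x) ^ 2 + θ ^ 2 := by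
        nlinarith [sq_nonneg (|f x - ft x| - θ), sq_abs (f x - ft x)]
      rw [show (f x - ft x) ^ 2 / (2 * θ) + θ / 2 = ((f x - ft x) ^ 2 + θ ^ 2) / (2 * θ) by
        field_simp]
      rw [le_div_iff₀ (by positivity)]
      nlinarith
    have hstep2 : ∫ x in B, ((f x - ft x) ^ 2 / (2 * θ) + θ / 2) =
        (∫ x in B, (f x - ft x) ^ 2) / (2 * θ) + (volume B).toReal * (θ / 2) := by
      rw [integral_add ((hg2i.div_const (2 * θ)).integrableOn)
        (integrableOn_const hBlt.ne), integral_div,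
        setIntegral_const, smul_eq_mul, Measure.real]
    have hsetg2 : ∫ x in B, (f x - ft x) ^ 2 ≤ ε ^ 2 := by
      refine le_trans (setIntegral_le_integral hg2i
        (Filter.Eventually.of_forall fun x => sq_nonneg _)) hg2
    have hsqrt2 : Real.sqrt ε * Real.sqrt ε = ε := Real.mul_self_sqrt hε₀.le
    have hb1 : (∫ x in B, (f x - ft x) ^ 2) / (2 * θ) ≤ Real.sqrt ε / 2 := by
      calc (∫ x in B, (f x - ft x) ^ 2) / (2 * θ) ≤ ε ^ 2 / (2 * θ) := by
            apply div_le_div_of_nonneg_right hsetg2 ?_ |>.trans_eq rfl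
            positivity
        _ = Real.sqrt ε / 2 := by
            rw [hθdef, div_eq_div_iff (by positivity) (by norm_num)]
            linear_combination (-2 * ε) * hsqrt2
    have hb2 : (volume B).toReal * (θ / 2) ≤ Real.sqrt ε / 2 := by
      have h1' : (volume B).toReal * (θ / 2) ≤ Real.exp L * (θ / 2) :=
        mul_le_mul_of_nonneg_right hvol (by positivity)
      have h2' : Real.exp L * (θ / 2) = Real.sqrt ε / 2 := by
        rw [hexpL, hθdef]
        field_simp
      linarith
    linarith
  -- part 2 : the tail
  have habsle : ∀ x, |f x - ft x| ≤ f x + ft x := by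
    intro x
    rw [abs_sub_le_iff]
    constructor <;> nlinarith [hfnn x, hftnn x]
  have htail1 : ∀ m : EuclideanSpace ℝ (Fin d), ‖m‖ ≤ Real.sqrt d →
      ∫ x in Bᶜ, Real.exp (-π * ‖x - m‖ ^ 2) ≤
        Real.exp (-π * L / 2) * 2 ^ ((d : ℝ) / 2) := by
    intro m hm
    have hint2 : Integrable (fun x : EuclideanSpace ℝ (Fin d) =>
        Real.exp (-(π / 2) * ‖x - m‖ ^ 2)) :=
      Stmt9Aux.gauss_integrable d (π / 2) (by positivity) m
    have hpt : ∀ x ∈ Bᶜ, Real.exp (-π * ‖x - m‖ ^ 2) ≤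
        Real.exp (-π * L / 2) * Real.exp (-(π / 2) * ‖x - m‖ ^ 2) := by
      intro x hx
      have hxR : R ≤ ‖x‖ := by
        have hx' : x ∉ B := hx
        rw [hBdef, Metric.mem_ball, dist_zero_right, not_lt] at hx'
        exact hx'
      have h1 : Real.sqrt L ≤ ‖x - m‖ := by
        have hn := norm_sub_norm_le x m
        rw [hRdef, hrdef] at hxR
        linarith
      have h2 : L ≤ ‖x - m‖ ^ 2 := by
        nlinarith [Real.sq_sqrt hLpos.le, Real.sqrt_nonneg L, norm_nonneg (x - m)]
      rw [← Real.exp_add, Real.exp_le_exp]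
      nlinarith [Real.pi_pos]
    calc ∫ x in Bᶜ, Real.exp (-π * ‖x - m‖ ^ 2)
        ≤ ∫ x in Bᶜ, Real.exp (-π * L / 2) * Real.exp (-(π / 2) * ‖x - m‖ ^ 2) :=
          setIntegral_mono_on (Stmt9Aux.gauss_integrable d π Real.pi_pos m).integrableOn
            ((hint2.const_mul _).integrableOn) hB.compl hpt
      _ ≤ ∫ x, Real.exp (-π * L / 2) * Real.exp (-(π / 2) * ‖x - m‖ ^ 2) :=
          setIntegral_le_integral (hint2.const_mul _)
            (Filter.Eventually.of_forall fun x => by positivity)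
      _ = Real.exp (-π * L / 2) * (π / (π / 2)) ^ ((d : ℝ) / 2) := by
          rw [integral_const_mul, Stmt9Aux.gauss_integral d (π / 2) (by positivity) m]
      _ = Real.exp (-π * L / 2) * 2 ^ ((d : ℝ) / 2) := by
          congr 2
          field_simp
  have htailf : ∀ (ν : Fin k → EuclideanSpace ℝ (Fin d)), (∀ j, ‖ν j‖ ≤ Real.sqrt d) →
      ∫ x in Bᶜ, ((1 / (k:ℝ)) * ∑ j, Real.exp (-π * ‖x - ν j‖ ^ 2)) ≤
        Real.exp (-π * L / 2) * 2 ^ ((d : ℝ) / 2) := by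
    intro ν hν
    have hk' : (0:ℝ) < k := by exact_mod_cast hk
    rw [integral_const_mul, integral_finset_sum _
      (fun j _ => (Stmt9Aux.gauss_integrable d π Real.pi_pos (ν j)).integrableOn)]
    have hsum : ∑ j, ∫ x in Bᶜ, Real.exp (-π * ‖x - ν j‖ ^ 2) ≤
        (k : ℝ) * (Real.exp (-π * L / 2) * 2 ^ ((d : ℝ) / 2)) := by
      calc ∑ j, ∫ x in Bᶜ, Real.exp (-π * ‖x - ν j‖ ^ 2)
          ≤ ∑ _j : Fin k, Real.exp (-π * L / 2) * 2 ^ ((d : ℝ) / 2) :=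
            Finset.sum_le_sum fun j _ => htail1 (ν j) (hν j)
        _ = (k : ℝ) * (Real.exp (-π * L / 2) * 2 ^ ((d : ℝ) / 2)) := by
            simp [mul_comm]
    calc (1 / (k:ℝ)) * ∑ j, ∫ x in Bᶜ, Real.exp (-π * ‖x - ν j‖ ^ 2)
        ≤ (1 / (k:ℝ)) * ((k : ℝ) * (Real.exp (-π * L / 2) * 2 ^ ((d : ℝ) / 2))) := by
          exact mul_le_mul_of_nonneg_left hsum (by positivity)
      _ = Real.exp (-π * L / 2) * 2 ^ ((d : ℝ) / 2) := by
          field_simp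
  have htail : ∫ x in Bᶜ, |f x - ft x| ≤ Real.sqrt ε := by
    have hTf : ∫ x in Bᶜ, f x ≤ Real.exp (-π * L / 2) * 2 ^ ((d : ℝ) / 2) := by
      rw [setIntegral_congr_fun hB.compl (fun x _ => hf x)]
      exact htailf μ hμ
    have hTft : ∫ x in Bᶜ, ft x ≤ Real.exp (-π * L / 2) * 2 ^ ((d : ℝ) / 2) := by
      rw [setIntegral_congr_fun hB.compl (fun x _ => hft x)]
      exact htailf μt hμt
    have hnum2 : 2 * (Real.exp (-π * L / 2) * 2 ^ ((d : ℝ) / 2)) ≤ Real.sqrt ε := by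
      rw [hsqε]
      have h2d : (2 : ℝ) ^ ((d : ℝ) / 2) = Real.exp (Real.log 2 * ((d : ℝ) / 2)) := by
        rw [← Real.rpow_def_of_pos (by norm_num)]
      have h2' : (2 : ℝ) = Real.exp (Real.log 2) := by
        rw [Real.exp_log]; norm_num
      calc 2 * (Real.exp (-π * L / 2) * 2 ^ ((d : ℝ) / 2))
          = Real.exp (Real.log 2 + (-π * L / 2) + Real.log 2 * ((d : ℝ) / 2)) := by
            rw [h2d, Real.exp_add, Real.exp_add, ← h2']; ring
        _ ≤ Real.exp (-L / 2) := by
            rw [Real.exp_le_exp]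
            have hlog2 : Real.log 2 ≤ 1 := by
              linarith [Real.log_le_sub_one_of_pos (by norm_num : (0:ℝ) < 2)]
            have hlog2' : 0 < Real.log 2 := Real.log_pos (by norm_num)
            have hπ : 3 < π := Real.pi_gt_three
            have hd' : Real.log 2 * ((d : ℝ) / 2) ≤ (d : ℝ) / 2 := by
              nlinarith
            have hπL : 3 * L ≤ π * L := by nlinarith
            linarith
    calc ∫ x in Bᶜ, |f x - ft x| ≤ ∫ x in Bᶜ, (f x + ft x) :=
          setIntegral_mono_on hgabs.integrableOn ((hfi.add hfti).integrableOn)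
            hB.compl fun x _ => habsle x
      _ = (∫ x in Bᶜ, f x) + ∫ x in Bᶜ, ft x :=
          integral_add hfi.integrableOn hfti.integrableOn
      _ ≤ 2 * (Real.exp (-π * L / 2) * 2 ^ ((d : ℝ) / 2)) := by linarith
      _ ≤ Real.sqrt ε := hnum2
  rw [hsplit]
  linarith
end

section
/- Suppose ℱ = {D_1,…,D_M} is a finite set of probability distributions on a measurable space 𝒳 and D is a distribution with ‖D − D''‖_{TV} ≤ δ for some D'' ∈ ℱ. Given, for each pair i ≠ j, an estimate p_{ij} with |p_{ij} − Pr_{x←D}[x ∈ A_{ij}]| ≤ δ/2, where A_{ij} is a set achieving the total variation distance between D_i and D_j, the algorithm that outputs the first D_i satisfying |p_{ij} − Pr_{x←D_i}[x ∈ A_{ij}]| ≤ 3δ/2 for all j returns a distribution D* with ‖D − D*‖_{TV} ≤ 4δ. -/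
open MeasureTheory

noncomputable def tvDist {𝒳 : Type*} [MeasurableSpace 𝒳] (P Q : Measure 𝒳) : ℝ :=
  ⨆ s : {s : Set 𝒳 // MeasurableSet s}, ((P s).toReal - (Q s).toReal)

/-!
Since `D` is `δ`-close to `D' i₀`, every estimate `p i j` is within `3δ/2` of `Pr_{D' i₀}[A i j]`,
so `i₀` passes the test. If `i` passes, then on the set `A i i₀` the masses of `D' i` and `D' i₀`
are both close to `p i i₀`, which bounds `‖D' i - D' i₀‖_TV` by `3δ`; the triangle inequality
adds the remaining `δ`.
-/

namespace tvDist

variable {𝒳 : Type*} [MeasurableSpace 𝒳]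

lemma bddAbove (P Q : Measure 𝒳) [IsFiniteMeasure P] :
    BddAbove (Set.range fun s : {s : Set 𝒳 // MeasurableSet s} =>
      (P s).toReal - (Q s).toReal) := by
  refine ⟨(P Set.univ).toReal, ?_⟩
  rintro _ ⟨s, rfl⟩
  have hPs : (P s).toReal ≤ (P Set.univ).toReal := measureReal_mono (Set.subset_univ _)
  have hQs : 0 ≤ (Q s).toReal := ENNReal.toReal_nonneg
  dsimp only
  linarith

lemma sub_le (P Q : Measure 𝒳) [IsFiniteMeasure P] {s : Set 𝒳} (hs : MeasurableSet s) :
    (P s).toReal - (Q s).toReal ≤ tvDist P Q :=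
  le_ciSup (bddAbove P Q) ⟨s, hs⟩

lemma abs_sub_le (P Q : Measure 𝒳) [IsProbabilityMeasure P] [IsProbabilityMeasure Q]
    {s : Set 𝒳} (hs : MeasurableSet s) :
    |(P s).toReal - (Q s).toReal| ≤ tvDist P Q := by
  have hPc : (P sᶜ).toReal = 1 - (P s).toReal := probReal_compl_eq_one_sub hs
  have hQc : (Q sᶜ).toReal = 1 - (Q s).toReal := probReal_compl_eq_one_sub hs
  have hcompl := sub_le P Q hs.compl
  exact abs_le.mpr ⟨by linarith, sub_le P Q hs⟩

lemma comm (P Q : Measure 𝒳) [IsProbabilityMeasure P] [IsProbabilityMeasure Q] :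
    tvDist P Q = tvDist Q P := by
  have le_swap : ∀ (P Q : Measure 𝒳) [IsProbabilityMeasure P] [IsProbabilityMeasure Q],
      tvDist P Q ≤ tvDist Q P := fun P Q _ _ =>
    ciSup_le fun ⟨s, hs⟩ => (le_abs_self _).trans (by rw [abs_sub_comm]; exact abs_sub_le Q P hs)
  exact le_antisymm (le_swap P Q) (le_swap Q P)

lemma triangle (P Q R : Measure 𝒳) [IsFiniteMeasure P] [IsFiniteMeasure Q] :
    tvDist P R ≤ tvDist P Q + tvDist Q R :=
  ciSup_le fun ⟨s, hs⟩ => by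
    have hPQ := sub_le P Q hs
    have hQR := sub_le Q R hs
    dsimp only
    linarith

end tvDist

theorem stmt_13_general {𝒳 : Type*} [MeasurableSpace 𝒳] (M : ℕ)
    (D' : Fin M → Measure 𝒳) [∀ i, IsProbabilityMeasure (D' i)]
    (D : Measure 𝒳) [IsProbabilityMeasure D]
    (δ : ℝ)
    (i₀ : Fin M) (h₀ : tvDist D (D' i₀) ≤ δ)
    (A : Fin M → Fin M → Set 𝒳) (hAm : ∀ i j, MeasurableSet (A i j))
    (hA : ∀ i j, ((D' i) (A i j)).toReal - ((D' j) (A i j)).toReal = tvDist (D' i) (D' j))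
    (p : Fin M → Fin M → ℝ)
    (hp : ∀ i j, |p i j - (D (A i j)).toReal| ≤ δ / 2) :
    (∃ i, ∀ j, |p i j - ((D' i) (A i j)).toReal| ≤ 3 * δ / 2) ∧
      ∀ i, (∀ j, |p i j - ((D' i) (A i j)).toReal| ≤ 3 * δ / 2) →
        tvDist D (D' i) ≤ 4 * δ := by
  have hclose : ∀ i j, |(D (A i j)).toReal - ((D' i₀) (A i j)).toReal| ≤ δ := fun i j =>
    (tvDist.abs_sub_le D (D' i₀) (hAm i j)).trans h₀
  refine ⟨⟨i₀, fun j => ?_⟩, fun i hi => ?_⟩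
  · calc |p i₀ j - ((D' i₀) (A i₀ j)).toReal|
        ≤ |p i₀ j - (D (A i₀ j)).toReal| + |(D (A i₀ j)).toReal - ((D' i₀) (A i₀ j)).toReal| :=
          abs_sub_le _ _ _
      _ ≤ 3 * δ / 2 := by linarith [hp i₀ j, hclose i₀ j]
  · have hfar : tvDist (D' i₀) (D' i) ≤ 3 * δ := by
      rw [tvDist.comm, ← hA i i₀]
      linarith [abs_le.mp (hi i₀), abs_le.mp (hp i i₀), abs_le.mp (hclose i i₀)]
    linarith [tvDist.triangle D (D' i₀) (D' i)]

/-- Tournament argument: if `D` is within TV distance `δ` of some member of the finite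
family `D'`, and we are given estimates `p i j` of `Pr_D[A i j]` accurate to `δ/2`,
where `A i j` achieves the TV distance between `D' i` and `D' j`, then some index passes
the test `∀ j, |p i j - Pr_{D' i}[A i j]| ≤ 3δ/2`, and every index passing the test
yields a distribution within TV distance `4δ` of `D`. -/
theorem stmt_13 {𝒳 : Type*} [MeasurableSpace 𝒳] (M : ℕ)
    (D' : Fin M → Measure 𝒳) [∀ i, IsProbabilityMeasure (D' i)]
    (D : Measure 𝒳) [IsProbabilityMeasure D]
    (δ : ℝ) (hδ : 0 < δ)
    (i₀ : Fin M) (h₀ : tvDist D (D' i₀) ≤ δ)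
    (A : Fin M → Fin M → Set 𝒳) (hAm : ∀ i j, MeasurableSet (A i j))
    (hA : ∀ i j, ((D' i) (A i j)).toReal - ((D' j) (A i j)).toReal = tvDist (D' i) (D' j))
    (p : Fin M → Fin M → ℝ)
    (hp : ∀ i j, |p i j - (D (A i j)).toReal| ≤ δ / 2) :
    (∃ i, ∀ j, |p i j - ((D' i) (A i j)).toReal| ≤ 3 * δ / 2) ∧
      ∀ i, (∀ j, |p i j - ((D' i) (A i j)).toReal| ≤ 3 * δ / 2) →
        tvDist D (D' i) ≤ 4 * δ :=
  stmt_13_general M D' D δ i₀ h₀ A hAm hA p hp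
end

section
/- Hessian test for being far from all means: let f be the p.d.f. of a mixture of k spherical Gaussians with parameters (w_j, μ_j, σ_j), j ∈ [k], where the j-th density is g_{μ_j,σ_j}(x) = σ_j^{-d}exp(−π‖x−μ_j‖²/σ_j²). If x ∈ ℝ^d satisfies ‖x − μ_j‖₂ > σ_j√(d/π) for every j, then the trace of the Hessian ∇²f(x) is strictly positive; in particular there exists a unit vector u with uᵀ(∇²f(x))u ≥ 2π·f(x)/max_j σ_j², so x is not a local maximum of f. -/
/-!
At `x` the Hessian has trace `4π² Σⱼ (wⱼ/σⱼ²) gⱼ(x) (‖x - μⱼ‖²/σⱼ² - d/(2π))`. The distance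
hypothesis makes every bracket exceed `d/(2π)`, and `σⱼ ≤ σmax`, so the trace is at least
`d · 2π f(x)/σmax²`. Some diagonal entry is at least the average of the diagonal, and the
corresponding standard basis vector is the required direction.
-/

open Real Finset

theorem Matrix.exists_unit_quadForm_ge_of_card_mul_le_trace {ι : Type*} [Fintype ι]
    [DecidableEq ι] [Nonempty ι] (H : Matrix ι ι ℝ) {c : ℝ}
    (h : Fintype.card ι * c ≤ H.trace) :
    ∃ u : EuclideanSpace ℝ ι, ‖u‖ = 1 ∧ c ≤ ∑ r, ∑ s, u r * H r s * u s := by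
  have hsum : ∑ _i : ι, c ≤ ∑ i, H i i := by simpa [Matrix.trace] using h
  obtain ⟨i, -, hi⟩ := exists_le_of_sum_le univ_nonempty hsum
  refine ⟨EuclideanSpace.single i 1, by simp, ?_⟩
  simpa using hi

theorem Matrix.trace_eq_of_entries_eq_sum_outer_sub_diag {ι κ : Type*} [Fintype ι]
    [DecidableEq ι] [Fintype κ] (H : Matrix ι ι ℝ) (K c : ℝ) (a b : κ → ℝ)
    (v : κ → EuclideanSpace ℝ ι)
    (hH : ∀ r s, H r s = K * ∑ j, a j * (v j r * v j s / b j - if r = s then c else 0)) :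
    H.trace = K * ∑ j, a j * (‖v j‖ ^ 2 / b j - Fintype.card ι * c) := by
  simp only [Matrix.trace, Matrix.diag, hH, ← mul_sum]
  rw [sum_comm]
  congr 1
  refine sum_congr rfl fun j _ => ?_
  rw [← mul_sum, sum_sub_distrib, ← sum_div, EuclideanSpace.norm_sq_eq]
  simp [sq]

theorem lt_sq_div_sq_of_mul_sqrt_lt {t σ r : ℝ} (ht : 0 ≤ t) (hσ : 0 < σ)
    (h : σ * √t < r) : t < r ^ 2 / σ ^ 2 := by
  have := pow_lt_pow_left₀ h (by positivity) two_ne_zero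
  rw [mul_pow, sq_sqrt ht] at this
  rwa [lt_div_iff₀ (by positivity), mul_comm]

theorem stmt_17_general (d k : ℕ) (hd : 0 < d) (hk : 0 < k)
    (w : Fin k → ℝ) (μ : Fin k → EuclideanSpace ℝ (Fin d)) (σ : Fin k → ℝ)
    (hw : ∀ j, 0 < w j) (hσ : ∀ j, 0 < σ j)
    (σmax : ℝ) (hσmaxpos : 0 < σmax) (hσmax : ∀ j, σ j ≤ σmax)
    (g : Fin k → EuclideanSpace ℝ (Fin d) → ℝ)
    (hg : ∀ j y, g j y = (σ j ^ d)⁻¹ * Real.exp (-π * ‖y - μ j‖ ^ 2 / σ j ^ 2))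
    (x : EuclideanSpace ℝ (Fin d))
    (hx : ∀ j, σ j * Real.sqrt (d / π) < ‖x - μ j‖)
    (H : Matrix (Fin d) (Fin d) ℝ)
    (hH : ∀ r s, H r s = 4 * π ^ 2 * ∑ j, (w j / σ j ^ 2) * g j x *
        ((x - μ j) r * (x - μ j) s / σ j ^ 2 - (if r = s then 1 / (2 * π) else 0))) :
    0 < H.trace ∧ ∃ u : EuclideanSpace ℝ (Fin d), ‖u‖ = 1 ∧
      2 * π * (∑ j, w j * g j x) / σmax ^ 2 ≤ ∑ r, ∑ s, u r * H r s * u s := by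
  have hg_pos (j) : 0 < g j x := by
    rw [hg]
    have := hσ j
    positivity
  have hf_pos : 0 < ∑ j, w j * g j x :=
    sum_pos (fun j _ => mul_pos (hw j) (hg_pos j)) ⟨⟨0, hk⟩, mem_univ _⟩
  have htrace := H.trace_eq_of_entries_eq_sum_outer_sub_diag _ _
    (fun j => w j / σ j ^ 2 * g j x) (fun j => σ j ^ 2) (fun j => x - μ j) hH
  have hbound : d * (2 * π * (∑ j, w j * g j x) / σmax ^ 2) ≤ H.trace := by
    rw [htrace, Fintype.card_fin]
    calc d * (2 * π * (∑ j, w j * g j x) / σmax ^ 2)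
        = 4 * π ^ 2 * ∑ j, w j / σmax ^ 2 * g j x * (d * (1 / (2 * π))) := by
          rw [mul_sum, sum_div, mul_sum, mul_sum]
          refine sum_congr rfl fun j _ => ?_
          field_simp
          ring
      _ ≤ 4 * π ^ 2 * ∑ j, w j / σ j ^ 2 * g j x *
            (‖x - μ j‖ ^ 2 / σ j ^ 2 - d * (1 / (2 * π))) := by
          refine mul_le_mul_of_nonneg_left (sum_le_sum fun j _ => ?_) (by positivity)
          have := hw j; have := hg_pos j; have := hσ j; have := hσmax j
          have hdist := lt_sq_div_sq_of_mul_sqrt_lt (by positivity) (hσ j) (hx j)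
          have hhalf : d * (1 / (2 * π)) = d / π / 2 := by field_simp
          gcongr
          linarith
  have : Nonempty (Fin d) := ⟨⟨0, hd⟩⟩
  refine ⟨lt_of_lt_of_le (by positivity) hbound,
    H.exists_unit_quadForm_ge_of_card_mul_le_trace (by simpa using hbound)⟩

/-- Hessian test: if a point `x` is at distance more than `σⱼ√(d/π)` from every mean of
a mixture of spherical Gaussians, then the trace of the Hessian of the mixture density
at `x` is strictly positive, and there is a unit direction `u` along which the quadratic
form of the Hessian is at least `2π f(x)/σ_max²`; in particular `x` is not a local
maximum of the density. -/
theorem stmt_17 (d k : ℕ) (hd : 0 < d) (hk : 0 < k)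
    (w : Fin k → ℝ) (μ : Fin k → EuclideanSpace ℝ (Fin d)) (σ : Fin k → ℝ)
    (hw : ∀ j, 0 < w j) (hwsum : ∑ j, w j = 1) (hσ : ∀ j, 0 < σ j)
    (σmax : ℝ) (hσmaxpos : 0 < σmax) (hσmax : ∀ j, σ j ≤ σmax)
    (g : Fin k → EuclideanSpace ℝ (Fin d) → ℝ)
    (hg : ∀ j y, g j y = (σ j ^ d)⁻¹ * Real.exp (-π * ‖y - μ j‖ ^ 2 / σ j ^ 2))
    (x : EuclideanSpace ℝ (Fin d))
    (hx : ∀ j, σ j * Real.sqrt (d / π) < ‖x - μ j‖)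
    (H : Matrix (Fin d) (Fin d) ℝ)
    (hH : ∀ r s, H r s = 4 * π ^ 2 * ∑ j, (w j / σ j ^ 2) * g j x *
        ((x - μ j) r * (x - μ j) s / σ j ^ 2 - (if r = s then 1 / (2 * π) else 0))) :
    0 < H.trace ∧ ∃ u : EuclideanSpace ℝ (Fin d), ‖u‖ = 1 ∧
      2 * π * (∑ j, w j * g j x) / σmax ^ 2 ≤ ∑ r, ∑ s, u r * H r s * u s :=
  stmt_17_general d k hd hk w μ σ hw hσ σmax hσmaxpos hσmax g hg x hx H hH
end
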